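/- Define T(a,b) for naturals a,b with a+b ≥ 1 by T(a,b) = {0, T(a-1,b) | 0, T(a,b-1)} (options with negative index omitted). Then: T(a,a) = *2 for a ≥ 1; T(a,b) = * when |a-b| = 1; T(a,b) = up^[a-b-1] + * when a ≥ b+2; and T(a,b) = down_[b-a-1] + * when b ≥ a+2. Here up^[n], down_[n] are the iterated up/down games (up^[1] = {0|*}, up^[n] = {up^[n-1]|*}; down_[1] = {*|0}, down_[n] = {*|down_[n-1]}), * = {0|0}, and *2 = {0,*|0,*}. -/

import Mathlib

/-! Combinatorial game theory (`SetTheory.PGame`) has been removed from Mathlib; the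
definitions used below are restated here with their old Mathlib meaning. -/

namespace SetTheory

universe u

/-- pre-games, as in the old `Mathlib.SetTheory.Game.PGame` -/
inductive PGame : Type (u + 1)
  | mk : ∀ α β : Type u, (α → PGame) → (β → PGame) → PGame

namespace PGame

/-- the game `{L | R}` with finitely many options given by lists -/
def ofLists (L R : List PGame.{u}) : PGame.{u} :=
  mk (ULift (Fin L.length)) (ULift (Fin R.length)) (fun i => L[i.down.1]) fun j => R[j.down.1]

/-- the zero game `{ | }` -/
instance : Zero PGame :=
  ⟨⟨PEmpty, PEmpty, PEmpty.elim, PEmpty.elim⟩⟩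

/-- sum of pre-games -/
noncomputable instance : Add PGame.{u} :=
  ⟨fun x y => by
    induction x generalizing y with | mk xl xr _ _ IHxl IHxr => _
    induction y with | mk yl yr yL yR IHyl IHyr => _
    have y := mk yl yr yL yR
    refine ⟨xl ⊕ yl, xr ⊕ yr, Sum.rec ?_ ?_, Sum.rec ?_ ?_⟩
    · exact fun i => IHxl i y
    · exact IHyl
    · exact fun i => IHxr i y
    · exact IHyr⟩

/-- the pair (`x ≤ y`, `x ⧏ y`), defined by the usual mutual recursion -/
noncomputable def leLF (x : PGame.{u}) : PGame.{u} → Prop × Prop := by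
  induction x with
  | mk xl xr xL xR IHl IHr =>
    intro y
    induction y with
    | mk yl yr yL yR JHl JHr =>
      exact ((∀ i, (IHl i (mk yl yr yL yR)).2) ∧ ∀ j, (JHr j).2,
        (∃ i, (JHl i).1) ∨ ∃ j, (IHr j (mk yl yr yL yR)).1)

/-- `x ≤ y` for pre-games -/
instance : LE PGame.{u} :=
  ⟨fun x y => (leLF x y).1⟩

/-- equivalence of pre-games: `x ≤ y ∧ y ≤ x` -/
instance : HasEquiv PGame.{u} :=
  ⟨fun x y => x ≤ y ∧ y ≤ x⟩

end PGame

end SetTheory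

open SetTheory PGame

/-- star = {0|0} -/
noncomputable def star' : PGame := PGame.ofLists [0] [0]
/-- up = {0|*} -/
noncomputable def up' : PGame := PGame.ofLists [0] [star']
/-- down = {*|0} -/
noncomputable def down' : PGame := PGame.ofLists [star'] [0]

/-- sum of n copies of up -/
noncomputable def nUp : ℕ → PGame
  | 0 => 0
  | n + 1 => nUp n + up'

/-- sum of n copies of down -/
noncomputable def nDown : ℕ → PGame
  | 0 => 0
  | n + 1 => nDown n + down'

/-- iterated up: up^[1] = ↑, up^[n] = {up^[n-1] | *} -/
noncomputable def upIter : ℕ → PGame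
  | 0 => 0
  | 1 => up'
  | n + 2 => PGame.ofLists [upIter (n + 1)] [star']

/-- iterated down: down_[1] = ↓, down_[n] = {* | down_[n-1]} -/
noncomputable def downIter : ℕ → PGame
  | 0 => 0
  | 1 => down'
  | n + 2 => PGame.ofLists [star'] [downIter (n + 1)]

/-- the nimber *2 = {0,* | 0,*} -/
noncomputable def star2 : PGame := PGame.ofLists [0, star'] [0, star']

/-- Partizan Domination game on a star: universal vertex colored C,
`a` leaves colored A, `b` leaves colored B (T 0 0 = 0: game over). -/
noncomputable def T : ℕ → ℕ → PGame
  | 0, 0 => 0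
  | a + 1, 0 => PGame.ofLists [0, T a 0] [0]
  | 0, b + 1 => PGame.ofLists [0] [0, T 0 b]
  | a + 1, b + 1 => PGame.ofLists [0, T a (b + 1)] [0, T (a + 1) b]


/-! By `T a b = -T b a` it suffices to show `T (b + k + 1) b ≈ ↑^[k] + *`, which goes by
well-founded induction on `2 b + k`; the diagonal `T (b+1) (b+1) = {0, T b (b+1) | 0, T (b+1) b}`
is then `{0, * | 0, *} = *2`. Since `* + * ≈ 0`, the game `↑^[n+1] + *` has the options
`{↑^[n] + *, ↑^[n+1] | 0, ↑^[n+1]}`, from which `{0, ↑^[n] + * | 0} ≈ ↑^[n+1] + *` is checked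
directly. The two other shapes that occur, `{0, ↑^[n] + * | 0, ↑^[n+2] + *}` and
`{0, *2 | 0, ↑ + *}`, reduce to `{0, ↑^[n] + * | 0}` and `{0, *2 | 0} ≈ *`: a Right option `y`
with `G ⧏ y` can be added to `G` without changing its value. -/

namespace SetTheory.PGame

def LeftMoves : PGame → Type _
  | mk l _ _ _ => l

def RightMoves : PGame → Type _
  | mk _ r _ _ => r

def moveLeft : (x : PGame) → x.LeftMoves → PGame
  | mk _ _ L _ => L

def moveRight : (x : PGame) → x.RightMoves → PGame
  | mk _ _ _ R => R

def LF (x y : PGame) : Prop := (leLF x y).2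

infix:50 " ⧏ " => LF

section Order

variable {x y z : PGame}

theorem le_iff_forall_lf : x ≤ y ↔ (∀ i, x.moveLeft i ⧏ y) ∧ ∀ j, x ⧏ y.moveRight j := by
  cases x; cases y; rfl

theorem lf_iff_exists_le : x ⧏ y ↔ (∃ i, x ≤ y.moveLeft i) ∨ ∃ j, x.moveRight j ≤ y := by
  cases x; cases y; rfl

theorem le_of_forall_lf (h₁ : ∀ i, x.moveLeft i ⧏ y) (h₂ : ∀ j, x ⧏ y.moveRight j) : x ≤ y :=
  le_iff_forall_lf.2 ⟨h₁, h₂⟩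

theorem lf_of_le_moveLeft {i : y.LeftMoves} (h : x ≤ y.moveLeft i) : x ⧏ y :=
  lf_iff_exists_le.2 (.inl ⟨i, h⟩)

theorem lf_of_moveRight_le {j : x.RightMoves} (h : x.moveRight j ≤ y) : x ⧏ y :=
  lf_iff_exists_le.2 (.inr ⟨j, h⟩)

theorem le_trans_aux (x : PGame) : ∀ y z : PGame,
    (x ≤ y → y ≤ z → x ≤ z) ∧ (x ⧏ y → y ≤ z → x ⧏ z) ∧ (x ≤ y → y ⧏ z → x ⧏ z) := by
  induction x with
  | mk xl xr xL xR ihxl ihxr =>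
    intro y
    induction y with
    | mk yl yr yL yR ihyl ihyr =>
      intro z
      induction z with
      | mk zl zr zL zR ihzl ihzr =>
        refine ⟨fun hxy hyz => le_of_forall_lf
            (fun i => (ihxl i _ _).2.1 ((le_iff_forall_lf.1 hxy).1 i) hyz)
            (fun j => (ihzr j).2.2 hxy ((le_iff_forall_lf.1 hyz).2 j)),
          fun hxy hyz => ?_, fun hxy hyz => ?_⟩
        · rcases lf_iff_exists_le.1 hxy with ⟨i, hi⟩ | ⟨j, hj⟩
          · exact (ihyl i _).2.2 hi ((le_iff_forall_lf.1 hyz).1 i)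
          · exact lf_of_moveRight_le ((ihxr j _ _).1 hj hyz)
        · rcases lf_iff_exists_le.1 hyz with ⟨i, hi⟩ | ⟨j, hj⟩
          · exact lf_of_le_moveLeft ((ihzl i).1 hxy hi)
          · exact (ihyr j _).2.1 ((le_iff_forall_lf.1 hxy).2 j) hj

instance : Preorder PGame where
  le_refl x := by
    induction x with
    | mk _ _ _ _ ihl ihr =>
      exact le_of_forall_lf (fun i => lf_of_le_moveLeft (ihl i))
        (fun j => lf_of_moveRight_le (ihr j))
  le_trans x y z := (le_trans_aux x y z).1

theorem lf_of_lf_of_le (h₁ : x ⧏ y) (h₂ : y ≤ z) : x ⧏ z := (le_trans_aux x y z).2.1 h₁ h₂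

theorem lf_of_le_of_lf (h₁ : x ≤ y) (h₂ : y ⧏ z) : x ⧏ z := (le_trans_aux x y z).2.2 h₁ h₂

theorem equiv_refl (x : PGame) : x ≈ x := ⟨le_rfl, le_rfl⟩

theorem equiv_symm (h : x ≈ y) : y ≈ x := ⟨h.2, h.1⟩

theorem equiv_trans (h₁ : x ≈ y) (h₂ : y ≈ z) : x ≈ z := ⟨h₁.1.trans h₂.1, h₂.2.trans h₁.2⟩

end Order

section OfLists

variable {L R L' R' : List PGame} {x y : PGame}

theorem lf_ofLists (hy : y ∈ L) (h : x ≤ y) : x ⧏ ofLists L R := by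
  obtain ⟨i, hi, rfl⟩ := List.getElem_of_mem hy
  exact lf_of_le_moveLeft (i := ⟨⟨i, hi⟩⟩) h

theorem ofLists_lf (hy : y ∈ R) (h : y ≤ x) : ofLists L R ⧏ x := by
  obtain ⟨i, hi, rfl⟩ := List.getElem_of_mem hy
  exact lf_of_moveRight_le (j := ⟨⟨i, hi⟩⟩) h

theorem forall_moveLeft_ofLists {P : PGame → Prop} :
    (∀ i, P ((ofLists L R).moveLeft i)) ↔ ∀ x ∈ L, P x := by
  refine ⟨fun h x hx => ?_, fun h i => h _ (List.getElem_mem _)⟩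
  obtain ⟨i, hi, rfl⟩ := List.getElem_of_mem hx
  exact h ⟨⟨i, hi⟩⟩

theorem forall_moveRight_ofLists {P : PGame → Prop} :
    (∀ j, P ((ofLists L R).moveRight j)) ↔ ∀ y ∈ R, P y := by
  refine ⟨fun h y hy => ?_, fun h j => h _ (List.getElem_mem _)⟩
  obtain ⟨j, hj, rfl⟩ := List.getElem_of_mem hy
  exact h ⟨⟨j, hj⟩⟩

theorem ofLists_le_ofLists_iff :
    ofLists L R ≤ ofLists L' R' ↔
      (∀ x ∈ L, x ⧏ ofLists L' R') ∧ ∀ y ∈ R', ofLists L R ⧏ y :=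
  le_iff_forall_lf.trans
    (and_congr (forall_moveLeft_ofLists (P := (· ⧏ ofLists L' R'))) forall_moveRight_ofLists)

theorem zero_le_ofLists (h : ∀ y ∈ R, 0 ⧏ y) : 0 ≤ ofLists L R :=
  le_of_forall_lf (fun i => i.elim) (forall_moveRight_ofLists.2 h)

theorem ofLists_le_zero (h : ∀ x ∈ L, x ⧏ 0) : ofLists L R ≤ 0 :=
  le_of_forall_lf ((forall_moveLeft_ofLists (P := (· ⧏ 0))).2 h) (fun j => j.elim)

theorem ofLists_le_ofLists_of_subset (hL : L ⊆ L') (hR : R' ⊆ R) :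
    ofLists L R ≤ ofLists L' R' :=
  ofLists_le_ofLists_iff.2
    ⟨fun _ hx => lf_ofLists (hL hx) le_rfl, fun _ hy => ofLists_lf (hR hy) le_rfl⟩

theorem ofLists_le_ofLists_of_forall₂ (hL : List.Forall₂ (· ≤ ·) L L')
    (hR : List.Forall₂ (· ≤ ·) R R') : ofLists L R ≤ ofLists L' R' := by
  rw [List.forall₂_iff_get] at hL hR
  refine le_of_forall_lf (fun ⟨i⟩ => ?_) (fun ⟨j⟩ => ?_)
  · exact lf_of_le_moveLeft (i := ⟨⟨i, i.2.trans_eq hL.1⟩⟩) (hL.2 i i.2 _)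
  · exact lf_of_moveRight_le (j := ⟨⟨j, j.2.trans_eq hR.1.symm⟩⟩) (hR.2 j _ j.2)

theorem ofLists_congr (hL : List.Forall₂ (· ≈ ·) L L') (hR : List.Forall₂ (· ≈ ·) R R') :
    ofLists L R ≈ ofLists L' R' :=
  ⟨ofLists_le_ofLists_of_forall₂ (hL.imp fun _ _ h => h.1) (hR.imp fun _ _ h => h.1),
    ofLists_le_ofLists_of_forall₂ (hL.flip.imp fun _ _ h => h.2) (hR.flip.imp fun _ _ h => h.2)⟩

theorem ofLists_equiv_of_subset_right (hR : R ⊆ R') (h : ∀ y ∈ R', ofLists L R ⧏ y) :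
    ofLists L R' ≈ ofLists L R :=
  ⟨ofLists_le_ofLists_of_subset (List.Subset.refl L) hR,
    ofLists_le_ofLists_iff.2 ⟨fun _ hx => lf_ofLists hx le_rfl, h⟩⟩

end OfLists

section Add

variable {x y z : PGame}

theorem add_le_iff : x + y ≤ z ↔
    (∀ i, x.moveLeft i + y ⧏ z) ∧ (∀ j, x + y.moveLeft j ⧏ z) ∧ ∀ k, x + y ⧏ z.moveRight k := by
  cases x; cases y
  rw [le_iff_forall_lf, ← and_assoc]
  exact and_congr_left' Sum.forall

theorem le_add_iff : z ≤ x + y ↔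
    (∀ k, z.moveLeft k ⧏ x + y) ∧ (∀ i, z ⧏ x.moveRight i + y) ∧ ∀ j, z ⧏ x + y.moveRight j := by
  cases x; cases y
  rw [le_iff_forall_lf]
  exact and_congr_right' Sum.forall

theorem lf_add_of_le_left {i : x.LeftMoves} (h : z ≤ x.moveLeft i + y) : z ⧏ x + y := by
  cases x; cases y; exact lf_of_le_moveLeft (i := .inl i) h

theorem lf_add_of_le_right {j : y.LeftMoves} (h : z ≤ x + y.moveLeft j) : z ⧏ x + y := by
  cases x; cases y; exact lf_of_le_moveLeft (i := .inr j) h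

theorem add_lf_of_left_le {i : x.RightMoves} (h : x.moveRight i + y ≤ z) : x + y ⧏ z := by
  cases x; cases y; exact lf_of_moveRight_le (j := .inl i) h

theorem add_lf_of_right_le {j : y.RightMoves} (h : x + y.moveRight j ≤ z) : x + y ⧏ z := by
  cases x; cases y; exact lf_of_moveRight_le (j := .inr j) h

theorem add_zero_equiv (x : PGame) : x + 0 ≈ x := by
  induction x with
  | mk xl xr xL xR ihl ihr =>
    exact ⟨add_le_iff.2 ⟨fun i => lf_of_le_moveLeft (ihl i).1, fun j => j.elim,
        fun j => add_lf_of_left_le (i := j) (ihr j).1⟩,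
      le_add_iff.2 ⟨fun i => lf_add_of_le_left (i := i) (ihl i).2,
        fun j => lf_of_moveRight_le (ihr j).2, fun j => j.elim⟩⟩

theorem zero_add_equiv (x : PGame) : 0 + x ≈ x := by
  induction x with
  | mk xl xr xL xR ihl ihr =>
    exact ⟨add_le_iff.2 ⟨fun i => i.elim, fun i => lf_of_le_moveLeft (ihl i).1,
        fun j => add_lf_of_right_le (j := j) (ihr j).1⟩,
      le_add_iff.2 ⟨fun i => lf_add_of_le_right (j := i) (ihl i).2, fun j => j.elim,
        fun j => lf_of_moveRight_le (ihr j).2⟩⟩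

theorem ofLists_add_ofLists_equiv (L R L' R' : List PGame) :
    ofLists L R + ofLists L' R' ≈
      ofLists (L.map (· + ofLists L' R') ++ L'.map (ofLists L R + ·))
        (R.map (· + ofLists L' R') ++ R'.map (ofLists L R + ·)) := by
  refine ⟨add_le_iff.2 ⟨fun i => lf_ofLists ?_ le_rfl, fun j => lf_ofLists ?_ le_rfl,
      forall_moveRight_ofLists.2 ?_⟩,
    le_add_iff.2 ⟨(forall_moveLeft_ofLists (P := (· ⧏ ofLists L R + ofLists L' R'))).2 ?_,
      fun i => ofLists_lf ?_ le_rfl, fun j => ofLists_lf ?_ le_rfl⟩⟩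
  all_goals simp only [List.mem_append, List.mem_map]
  · exact .inl ⟨_, List.getElem_mem _, rfl⟩
  · exact .inr ⟨_, List.getElem_mem _, rfl⟩
  · rintro _ (⟨r, hr, rfl⟩ | ⟨r, hr, rfl⟩) <;> obtain ⟨j, hj, rfl⟩ := List.getElem_of_mem hr
    · exact add_lf_of_left_le (i := ⟨⟨j, hj⟩⟩) le_rfl
    · exact add_lf_of_right_le (j := ⟨⟨j, hj⟩⟩) le_rfl
  · rintro _ (⟨l, hl, rfl⟩ | ⟨l, hl, rfl⟩) <;> obtain ⟨i, hi, rfl⟩ := List.getElem_of_mem hl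
    · exact lf_add_of_le_left (i := ⟨⟨i, hi⟩⟩) le_rfl
    · exact lf_add_of_le_right (j := ⟨⟨i, hi⟩⟩) le_rfl
  · exact .inl ⟨_, List.getElem_mem _, rfl⟩
  · exact .inr ⟨_, List.getElem_mem _, rfl⟩

end Add

section Neg

def neg : PGame → PGame
  | mk l r L R => mk r l (fun j => neg (R j)) fun i => neg (L i)

instance : Neg PGame := ⟨neg⟩

theorem neg_mk {l r : Type _} (L : l → PGame) (R : r → PGame) :
    -mk l r L R = mk r l (fun j => -R j) fun i => -L i := rfl

theorem heq_of_forall_fin_cast.{u, v} {α : Type v} {n m : ℕ} (h : n = m)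
    {f : ULift.{u} (Fin n) → α} {g : ULift.{u} (Fin m) → α}
    (hfg : ∀ i : Fin n, f ⟨i⟩ = g ⟨Fin.cast h i⟩) : f ≍ g := by
  subst h
  exact heq_of_eq (funext fun ⟨i⟩ => hfg i)

theorem neg_ofLists (L R : List PGame) :
    -ofLists L R = ofLists (R.map (-·)) (L.map (-·)) := by
  rw [ofLists, ofLists, neg_mk]
  congr 1 <;> first
    | rw [List.length_map]
    | exact heq_of_forall_fin_cast (List.length_map _).symm fun i => by simp

theorem neg_zero : -(0 : PGame) = 0 := by
  change mk PEmpty PEmpty _ _ = mk PEmpty PEmpty _ _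
  congr <;> funext i <;> exact i.elim

theorem neg_add (x y : PGame) : -(x + y) = -x + -y := by
  induction x generalizing y with
  | mk xl xr xL xR ihxl ihxr =>
    induction y with
    | mk yl yr yL yR ihyl ihyr =>
      change mk (xr ⊕ yr) (xl ⊕ yl) _ _ = mk (xr ⊕ yr) (xl ⊕ yl) _ _
      congr <;> funext k <;> rcases k with i | j
      exacts [ihxr i _, ihyr j, ihxl i _, ihyl j]

theorem neg_le_neg_aux (x : PGame) :
    ∀ y : PGame, (x ≤ y → -y ≤ -x) ∧ (x ⧏ y → -y ⧏ -x) := by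
  induction x with
  | mk xl xr xL xR ihxl ihxr =>
    intro y
    induction y with
    | mk yl yr yL yR ihyl ihyr =>
      refine ⟨fun h => le_of_forall_lf (fun j => (ihyr j).2 ((le_iff_forall_lf.1 h).2 j))
        (fun i => (ihxl i _).2 ((le_iff_forall_lf.1 h).1 i)), fun h => ?_⟩
      rcases lf_iff_exists_le.1 h with ⟨i, hi⟩ | ⟨j, hj⟩
      · exact lf_of_moveRight_le (j := i) ((ihyl i).1 hi)
      · exact lf_of_le_moveLeft (i := j) ((ihxr j _).1 hj)

theorem neg_le_neg {x y : PGame} (h : x ≤ y) : -y ≤ -x := (neg_le_neg_aux x y).1 h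

theorem neg_equiv_neg {x y : PGame} (h : x ≈ y) : -x ≈ -y := ⟨neg_le_neg h.2, neg_le_neg h.1⟩

end Neg

end SetTheory.PGame

theorem neg_star' : -star' = star' := by
  simp only [star', neg_ofLists, List.map_cons, List.map_nil, neg_zero]

theorem zero_lf_star' : (0 : PGame) ⧏ star' := lf_ofLists (List.mem_singleton_self 0) le_rfl

theorem star'_lf_zero : star' ⧏ 0 := ofLists_lf (List.mem_singleton_self 0) le_rfl

theorem star'_add_star'_equiv_zero : star' + star' ≈ 0 := by
  refine equiv_trans (ofLists_add_ofLists_equiv [0] [0] [0] [0])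
    ⟨ofLists_le_zero ?_, zero_le_ofLists ?_⟩
  all_goals simp only [List.map_cons, List.map_nil, List.cons_append, List.nil_append,
    List.forall_mem_cons, List.not_mem_nil, IsEmpty.forall_iff, implies_true, and_true]
  · exact ⟨lf_of_le_of_lf (zero_add_equiv star').1 star'_lf_zero,
      lf_of_le_of_lf (add_zero_equiv star').1 star'_lf_zero⟩
  · exact ⟨lf_of_lf_of_le zero_lf_star' (zero_add_equiv star').2,
      lf_of_lf_of_le zero_lf_star' (add_zero_equiv star').2⟩

theorem upIter_succ (n : ℕ) : upIter (n + 1) = ofLists [upIter n] [star'] := by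
  cases n <;> rfl

theorem zero_le_upIter : ∀ n : ℕ, 0 ≤ upIter n
  | 0 => le_rfl
  | n + 1 => by
    rw [upIter_succ]
    exact zero_le_ofLists (List.forall_mem_singleton.2 zero_lf_star')

theorem downIter_eq_neg_upIter : ∀ n : ℕ, downIter n = -upIter n
  | 0 => neg_zero.symm
  | 1 => by
    simp only [downIter, upIter, down', up', neg_ofLists, List.map_cons, List.map_nil, neg_zero,
      neg_star']
  | n + 2 => by
    rw [upIter, downIter, neg_ofLists, downIter_eq_neg_upIter (n + 1)]
    simp only [List.map_cons, List.map_nil, neg_star']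

theorem upIter_succ_add_star'_equiv (n : ℕ) :
    upIter (n + 1) + star' ≈ ofLists [upIter n + star', upIter (n + 1)] [0, upIter (n + 1)] := by
  rw [upIter_succ]
  exact equiv_trans (ofLists_add_ofLists_equiv [upIter n] [star'] [0] [0])
    (ofLists_congr (.cons (equiv_refl _) (.cons (add_zero_equiv _) .nil))
      (.cons star'_add_star'_equiv_zero (.cons (add_zero_equiv _) .nil)))

theorem upIter_add_star'_lf_succ (n : ℕ) : upIter n + star' ⧏ upIter (n + 1) + star' :=
  lf_of_lf_of_le (lf_ofLists (by simp) le_rfl) (upIter_succ_add_star'_equiv n).2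

theorem ofLists_zero_upIter_add_star'_zero_equiv (n : ℕ) :
    ofLists [0, upIter n + star'] [0] ≈ upIter (n + 1) + star' := by
  refine equiv_trans ?_ (equiv_symm (upIter_succ_add_star'_equiv n))
  have hup : 0 ≤ upIter (n + 1) := zero_le_upIter _
  have hstar : star' ≤ ofLists [0, upIter n + star'] [0] :=
    ofLists_le_ofLists_iff.2 ⟨List.forall_mem_singleton.2 (lf_ofLists (by simp) le_rfl),
      List.forall_mem_singleton.2 star'_lf_zero⟩
  refine ⟨ofLists_le_ofLists_iff.2 ⟨?_, ?_⟩, ofLists_le_ofLists_iff.2 ⟨?_, ?_⟩⟩ <;>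
    simp only [List.forall_mem_cons, List.not_mem_nil, IsEmpty.forall_iff, implies_true, and_true]
  · exact ⟨lf_ofLists (by simp) hup, lf_ofLists (by simp) le_rfl⟩
  · exact ⟨ofLists_lf (by simp) le_rfl, ofLists_lf (by simp) hup⟩
  · refine ⟨lf_ofLists (by simp) le_rfl, ?_⟩
    rw [upIter_succ]
    exact ofLists_lf (by simp) hstar
  · exact ofLists_lf (by simp) le_rfl

theorem ofLists_zero_upIter_add_star'_zero_upIter_add_star'_equiv (n : ℕ) :
    ofLists [0, upIter n + star'] [0, upIter (n + 2) + star'] ≈ upIter (n + 1) + star' := by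
  have h := ofLists_zero_upIter_add_star'_zero_equiv n
  refine equiv_trans (ofLists_equiv_of_subset_right (by simp) ?_) h
  simp only [List.forall_mem_cons, List.not_mem_nil, IsEmpty.forall_iff, implies_true, and_true]
  exact ⟨ofLists_lf (by simp) le_rfl, lf_of_le_of_lf h.1 (upIter_add_star'_lf_succ (n + 1))⟩

theorem ofLists_zero_star2_zero_upIter_add_star'_equiv :
    ofLists [0, star2] [0, upIter 1 + star'] ≈ star' := by
  have h : ofLists [0, star2] [0] ≈ star' := by
    refine ⟨ofLists_le_ofLists_iff.2 ⟨?_, ?_⟩, ofLists_le_ofLists_iff.2 ⟨?_, ?_⟩⟩ <;>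
      simp only [List.forall_mem_cons, List.not_mem_nil, IsEmpty.forall_iff, implies_true, and_true]
    · exact ⟨zero_lf_star', ofLists_lf (y := star') (by simp) le_rfl⟩
    · exact ofLists_lf (by simp) le_rfl
    · exact lf_ofLists (by simp) le_rfl
    · exact star'_lf_zero
  refine equiv_trans (ofLists_equiv_of_subset_right (by simp) ?_) h
  simp only [List.forall_mem_cons, List.not_mem_nil, IsEmpty.forall_iff, implies_true, and_true]
  exact ⟨ofLists_lf (by simp) le_rfl, lf_of_le_of_lf h.1
    (lf_of_le_of_lf (zero_add_equiv star').2 (upIter_add_star'_lf_succ 0))⟩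

universe u

theorem T_eq_neg_swap : ∀ a b : ℕ, T a b = -T b a
  | 0, 0 => by rw [T, neg_zero]
  | a + 1, 0 => by
    rw [T, T, neg_ofLists, T_eq_neg_swap a 0]
    simp only [List.map_cons, List.map_nil, neg_zero]
  | 0, b + 1 => by
    rw [T, T, neg_ofLists, T_eq_neg_swap 0 b]
    simp only [List.map_cons, List.map_nil, neg_zero]
  | a + 1, b + 1 => by
    rw [T, T, neg_ofLists, T_eq_neg_swap a (b + 1), T_eq_neg_swap (a + 1) b]
    simp only [List.map_cons, List.map_nil, neg_zero]

theorem T_swap_equiv_star' {a b : ℕ} (h : T.{u} a b ≈ star') : T.{u} b a ≈ star' := by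
  rw [T_eq_neg_swap, ← neg_star']
  exact neg_equiv_neg h

theorem T_one_zero_equiv_star' : T 1 0 ≈ star' := by
  rw [T, T]
  exact ⟨ofLists_le_ofLists_of_subset (by simp) (by simp),
    ofLists_le_ofLists_of_subset (by simp) (by simp)⟩

theorem T_succ_self_equiv_star2 {b : ℕ} (h : T.{u} (b + 1) b ≈ star') :
    T.{u} (b + 1) (b + 1) ≈ star2 := by
  rw [T]
  exact ofLists_congr (.cons (equiv_refl 0) (.cons (T_swap_equiv_star' h) .nil))
    (.cons (equiv_refl 0) (.cons h .nil))

theorem T_add_succ_equiv : ∀ b k : ℕ, T (b + k + 1) b ≈ upIter k + star'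
  | 0, 0 => equiv_trans T_one_zero_equiv_star' (equiv_symm (zero_add_equiv star'))
  | 0, k + 1 => by
    rw [Nat.zero_add, T]
    exact equiv_trans
      (ofLists_congr (.cons (equiv_refl 0) (.cons (by simpa using T_add_succ_equiv 0 k) .nil))
        (.cons (equiv_refl 0) .nil))
      (ofLists_zero_upIter_add_star'_zero_equiv k)
  | b + 1, 0 => by
    have hdiag := T_succ_self_equiv_star2
      (equiv_trans (T_add_succ_equiv b 0) (zero_add_equiv star'))
    rw [T]
    exact equiv_trans
      (ofLists_congr (.cons (equiv_refl 0) (.cons hdiag .nil))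
        (.cons (equiv_refl 0) (.cons (T_add_succ_equiv b 1) .nil)))
      (equiv_trans ofLists_zero_star2_zero_upIter_add_star'_equiv
        (equiv_symm (zero_add_equiv star')))
  | b + 1, k + 1 => by
    rw [T, show b + 1 + (k + 1) + 1 = b + (k + 2) + 1 by omega]
    exact equiv_trans
      (ofLists_congr (.cons (equiv_refl 0) (.cons (T_add_succ_equiv (b + 1) k) .nil))
        (.cons (equiv_refl 0) (.cons (T_add_succ_equiv b (k + 2)) .nil)))
      (ofLists_zero_upIter_add_star'_zero_upIter_add_star'_equiv k)
termination_by b k => 2 * b + k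

theorem T_succ_equiv_star' (b : ℕ) : T (b + 1) b ≈ star' :=
  equiv_trans (T_add_succ_equiv b 0) (zero_add_equiv star')

theorem stmt15 (a b : ℕ) (h : 1 ≤ a + b) :
    (a = b → T a b ≈ star2) ∧
    ((a = b + 1 ∨ b = a + 1) → T a b ≈ star') ∧
    (b + 2 ≤ a → T a b ≈ upIter (a - b - 1) + star') ∧
    (a + 2 ≤ b → T a b ≈ downIter (b - a - 1) + star') := by
  refine ⟨?_, ?_, ?_, ?_⟩
  · rintro rfl
    obtain ⟨c, rfl⟩ : ∃ c, a = c + 1 := ⟨a - 1, by omega⟩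
    exact T_succ_self_equiv_star2 (T_succ_equiv_star' c)
  · rintro (rfl | rfl)
    · exact T_succ_equiv_star' b
    · exact T_swap_equiv_star' (T_succ_equiv_star' a)
  · intro hab
    obtain ⟨k, rfl⟩ : ∃ k, a = b + k + 1 := ⟨a - b - 1, by omega⟩
    rw [show b + k + 1 - b - 1 = k by omega]
    exact T_add_succ_equiv b k
  · intro hab
    obtain ⟨k, rfl⟩ : ∃ k, b = a + k + 1 := ⟨b - a - 1, by omega⟩
    rw [show a + k + 1 - a - 1 = k by omega, T_eq_neg_swap, downIter_eq_neg_upIter, ← neg_star',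
      ← neg_add]
    exact neg_equiv_neg (T_add_succ_equiv a k)
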